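/- (Exact sparse recovery from an unbalanced expander.) Let R be a ring, ℓ ≥ 1, n = 2^ℓ − 1, and let t, d, m' ≥ 1 be integers. Let A be the m'×n adjacency matrix (with entries in {0_R, 1_R}) of a d-left-regular bipartite graph with left vertex set [n] and right vertex set [m'] that is a (t, 1/12)-unbalanced expander, let B be the ℓ×n matrix with entries in {0_R, 1_R} whose j-th column is the binary expansion of j, and let H := A ⊗_r B ∈ R^{(m'ℓ)×n}. Then there exists a function Rec : R^{m'ℓ} → Rⁿ such that Rec(Hx) = x for every x ∈ Rⁿ with ‖x‖₀ ≤ t. In particular, the linear map x ↦ Hx is injective on the set of t-sparse vectors of Rⁿ. -/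

import Mathlib

/-!
Let `x`, `y` be `t`-sparse with `Hx = Hy`, with supports `S`, `T` and `|T| ≤ |S|`. Expansion
with `ε = 1/12 < 1/4` yields a right vertex `i` adjacent to exactly one `j ∈ S` and to at most
one `j' ∈ T`. Block `i` of `Hx` is then `x_j` times the binary code of `j`, and block `i` of `Hy`
is `y_{j'}` times the code of `j'` (or zero); as codes are distinct and nonzero, `j = j'` and
`x_j = y_j`. Subtracting this common entry from both vectors keeps `Hx = Hy` and shrinks both
supports, so induction gives `x = y`; `Rec` is a left inverse of `x ↦ Hx` on sparse vectors.
-/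

open Matrix

/- `vecNnz x` is the number of nonzero entries `‖x‖₀` of a vector `x`. -/
open Classical in
noncomputable def vecNnz {R : Type*} [Zero R] {n : ℕ} (x : Fin n → R) : ℕ :=
  (Finset.univ.filter (fun i => x i ≠ 0)).card

open Finset Function

section Expander

variable {ι κ : Type*} [Fintype κ] [DecidableEq κ] {nbrs : ι → Finset κ} {d : ℕ}

theorem sum_card_filter_mem_nbrs (hreg : ∀ j, #(nbrs j) = d) (S : Finset ι) :
    ∑ i, #{j ∈ S | i ∈ nbrs j} = d * #S := by
  have h := sum_card_bipartiteAbove_eq_sum_card_bipartiteBelow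
    (s := S) (t := univ) (r := fun j i => i ∈ nbrs j)
  simp only [bipartiteAbove, bipartiteBelow, filter_mem_eq_inter, univ_inter, hreg,
    sum_const, smul_eq_mul] at h
  rw [← h, mul_comm]

theorem two_mul_card_biUnion_le (hreg : ∀ j, #(nbrs j) = d) (S : Finset ι) :
    2 * #(S.biUnion nbrs) ≤ d * #S + #{i | #{j ∈ S | i ∈ nbrs j} = 1} := by
  have hpoint : ∀ i ∈ S.biUnion nbrs,
      2 ≤ #{j ∈ S | i ∈ nbrs j} + if #{j ∈ S | i ∈ nbrs j} = 1 then 1 else 0 := by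
    intro i hi
    obtain ⟨j, hjS, hij⟩ := mem_biUnion.mp hi
    have : 0 < #{j ∈ S | i ∈ nbrs j} := card_pos.mpr ⟨j, mem_filter.mpr ⟨hjS, hij⟩⟩
    split_ifs <;> omega
  calc 2 * #(S.biUnion nbrs)
        ≤ ∑ i ∈ S.biUnion nbrs,
            (#{j ∈ S | i ∈ nbrs j} + if #{j ∈ S | i ∈ nbrs j} = 1 then 1 else 0) := by
          rw [mul_comm, ← smul_eq_mul]
          exact card_nsmul_le_sum _ _ 2 hpoint
    _ ≤ ∑ i, (#{j ∈ S | i ∈ nbrs j} + if #{j ∈ S | i ∈ nbrs j} = 1 then 1 else 0) :=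
      sum_le_sum_of_subset (subset_univ _)
    _ = d * #S + #{i | #{j ∈ S | i ∈ nbrs j} = 1} := by
      rw [sum_add_distrib, sum_card_filter_mem_nbrs hreg, card_filter]

/-- Otherwise each of the more than `d|S|/2` unique neighbours of `S` would absorb two of the
`d|T| ≤ d|S|` edges leaving `T`. -/
theorem exists_card_filter_mem_eq_one_and_le_one (hreg : ∀ j, #(nbrs j) = d)
    {S T : Finset ι} (hexp : 3 * (d * #S) < 4 * #(S.biUnion nbrs)) (hTS : #T ≤ #S) :
    ∃ i, #{j ∈ S | i ∈ nbrs j} = 1 ∧ #{j ∈ T | i ∈ nbrs j} ≤ 1 := by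
  by_contra! h
  have hunique : 2 * #{i | #{j ∈ S | i ∈ nbrs j} = 1} ≤ d * #S :=
    calc 2 * #{i | #{j ∈ S | i ∈ nbrs j} = 1}
          ≤ ∑ i ∈ {i | #{j ∈ S | i ∈ nbrs j} = 1}, #{j ∈ T | i ∈ nbrs j} := by
          rw [mul_comm, ← smul_eq_mul]
          exact card_nsmul_le_sum _ _ 2 fun i hi => h i (mem_filter.mp hi).2
      _ ≤ ∑ i, #{j ∈ T | i ∈ nbrs j} := sum_le_sum_of_subset (subset_univ _)
      _ = d * #T := sum_card_filter_mem_nbrs hreg T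
      _ ≤ d * #S := Nat.mul_le_mul_left d hTS
  have := two_mul_card_biUnion_le hreg S
  omega

end Expander

section BinaryCode

def binaryCode (ℓ a : ℕ) (k : Fin ℓ) : Bool := a.testBit (ℓ - 1 - k)

theorem binaryCode_injOn (ℓ : ℕ) : Set.InjOn (binaryCode ℓ) (Set.Iio (2 ^ ℓ)) := by
  intro a ha b hb h
  apply Nat.eq_of_testBit_eq
  intro i
  rcases lt_or_ge i ℓ with hi | hi
  · have := congrFun h ⟨ℓ - 1 - i, by omega⟩
    simpa only [binaryCode, show ℓ - 1 - (ℓ - 1 - i) = i by omega] using this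
  · have hpow : 2 ^ ℓ ≤ 2 ^ i := Nat.pow_le_pow_right two_pos hi
    rw [Nat.testBit_lt_two_pow (lt_of_lt_of_le ha hpow),
      Nat.testBit_lt_two_pow (lt_of_lt_of_le hb hpow)]

theorem exists_binaryCode_eq_true {ℓ a : ℕ} (ha : a < 2 ^ ℓ) (ha0 : a ≠ 0) :
    ∃ k, binaryCode ℓ a k = true := by
  by_contra! h
  refine ha0 (binaryCode_injOn ℓ ha (Nat.two_pow_pos ℓ) (funext fun k => ?_))
  simpa [binaryCode] using h k

end BinaryCode

section Decoding

variable {R ι κ β : Type*}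

open Classical in
noncomputable def vecSupp [Fintype ι] [Zero R] (x : ι → R) : Finset ι := {j | x j ≠ 0}

@[simp]
theorem mem_vecSupp [Fintype ι] [Zero R] {x : ι → R} {j : ι} : j ∈ vecSupp x ↔ x j ≠ 0 := by
  simp [vecSupp]

/-- `A ⊗_r B` for the adjacency matrix `A` of `nbrs` and the 0/1 matrix `B` with columns
`code j`. -/
def nbrCodeMatrix (R : Type*) [Zero R] [One R] [DecidableEq κ] (nbrs : ι → Finset κ)
    (code : ι → β → Bool) : Matrix (κ × β) ι R :=
  of fun p j => if p.1 ∈ nbrs j ∧ code j p.2 then 1 else 0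

theorem eq_and_eq_of_forall_ite_eq_ite [Zero R] {c c' : β → Bool} {a b : R} (ha : a ≠ 0)
    (hc : ∃ k, c k = true) (h : ∀ k, (if c k then a else 0) = if c' k then b else 0) :
    c = c' ∧ a = b := by
  obtain ⟨k, hk⟩ := hc
  have hab : a = b := by
    have := h k
    cases hc' : c' k <;> simp_all
  subst hab
  refine ⟨funext fun k => ?_, rfl⟩
  have hk := h k
  cases hck : c k <;> cases hck' : c' k <;> simp only [hck, hck', Bool.false_eq_true,
    if_true, if_false] at hk
  · rfl
  · exact absurd hk.symm ha
  · exact absurd hk ha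
  · rfl

variable [Ring R] [Fintype ι] [DecidableEq κ] {nbrs : ι → Finset κ} {code : ι → β → Bool}

theorem nbrCodeMatrix_mulVec_apply (x : ι → R) (i : κ) (k : β) :
    (nbrCodeMatrix R nbrs code *ᵥ x) (i, k) =
      ∑ j ∈ {j ∈ vecSupp x | i ∈ nbrs j}, if code j k then x j else 0 := by
  rw [sum_filter, sum_subset (subset_univ _) fun j _ hj => by
    rw [mem_vecSupp, not_not] at hj
    simp [hj]]
  simp [mulVec, dotProduct, nbrCodeMatrix, ite_and]

theorem nbrCodeMatrix_eq_of_mulVec_eq (hinj : Injective code) (hne : ∀ j, ∃ k, code j k = true)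
    {x y : ι → R} (heq : nbrCodeMatrix R nbrs code *ᵥ x = nbrCodeMatrix R nbrs code *ᵥ y)
    {i : κ} {j : ι} (hS : {j' ∈ vecSupp x | i ∈ nbrs j'} = {j})
    (hT : #{j' ∈ vecSupp y | i ∈ nbrs j'} ≤ 1) : x j = y j := by
  have hxj : x j ≠ 0 := by
    have := mem_singleton_self j
    rw [← hS, mem_filter, mem_vecSupp] at this
    exact this.1
  have hrow : ∀ k, (if code j k then x j else 0) =
      ∑ j' ∈ {j' ∈ vecSupp y | i ∈ nbrs j'}, if code j' k then y j' else 0 := fun k => by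
    simpa only [nbrCodeMatrix_mulVec_apply, hS, sum_singleton] using congrFun heq (i, k)
  rcases Nat.le_one_iff_eq_zero_or_eq_one.mp hT with hT | hT
  · obtain ⟨k, hk⟩ := hne j
    simpa [card_eq_zero.mp hT, hk, hxj] using hrow k
  · obtain ⟨j', hj'⟩ := card_eq_one.mp hT
    simp only [hj', sum_singleton] at hrow
    obtain ⟨hcode, hval⟩ := eq_and_eq_of_forall_ite_eq_ite hxj (hne j) hrow
    rwa [← hinj hcode] at hval

theorem nbrCodeMatrix_exists_eq_of_mulVec_eq {d : ℕ} [Fintype κ] (hreg : ∀ j, #(nbrs j) = d)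
    (hinj : Injective code) (hne : ∀ j, ∃ k, code j k = true) {x y : ι → R}
    (hexp : 3 * (d * #(vecSupp x)) < 4 * #((vecSupp x).biUnion nbrs))
    (hyx : #(vecSupp y) ≤ #(vecSupp x))
    (heq : nbrCodeMatrix R nbrs code *ᵥ x = nbrCodeMatrix R nbrs code *ᵥ y) :
    ∃ j, x j ≠ 0 ∧ x j = y j := by
  obtain ⟨i, hS, hT⟩ := exists_card_filter_mem_eq_one_and_le_one hreg hexp hyx
  obtain ⟨j, hj⟩ := card_eq_one.mp hS
  have hjx : j ∈ vecSupp x := (mem_filter.mp (hj ▸ mem_singleton_self j)).1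
  exact ⟨j, mem_vecSupp.mp hjx, nbrCodeMatrix_eq_of_mulVec_eq hinj hne heq hj hT⟩

end Decoding

section Peeling

variable {R κ : Type*} [Ring R] {n : ℕ}

theorem vecNnz_eq_zero_iff {x : Fin n → R} : vecNnz x = 0 ↔ x = 0 := by
  change #(vecSupp x) = 0 ↔ x = 0
  rw [card_eq_zero, eq_empty_iff_forall_notMem, funext_iff]
  simp

theorem vecNnz_sub_single_lt {x : Fin n → R} {j : Fin n} (hj : x j ≠ 0) :
    vecNnz (x - Pi.single j (x j)) < vecNnz x := by
  change #(vecSupp _) < #(vecSupp x)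
  have hsupp : vecSupp (x - Pi.single j (x j)) = (vecSupp x).erase j := by
    ext j'
    by_cases h : j' = j
    · subst h; simp
    · simp [h]
  rw [hsupp]
  exact card_erase_lt_of_mem (mem_vecSupp.mpr hj)

theorem eq_of_mulVec_eq_of_exists_eq (M : Matrix κ (Fin n) R) (t : ℕ)
    (hM : ∀ x y : Fin n → R, vecNnz x ≤ t → vecNnz y ≤ vecNnz x → x ≠ 0 → M *ᵥ x = M *ᵥ y →
      ∃ j, x j ≠ 0 ∧ x j = y j)
    {x y : Fin n → R} (hx : vecNnz x ≤ t) (hy : vecNnz y ≤ t) (heq : M *ᵥ x = M *ᵥ y) :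
    x = y := by
  induction hN : vecNnz x + vecNnz y using Nat.strong_induction_on generalizing x y with
  | _ N ih =>
  wlog hyx : vecNnz y ≤ vecNnz x generalizing x y
  · exact (this hy hx heq.symm (by omega) (by omega)).symm
  rcases eq_or_ne x 0 with rfl | hx0
  · have h0 : vecNnz (0 : Fin n → R) = 0 := vecNnz_eq_zero_iff.mpr rfl
    exact (vecNnz_eq_zero_iff.mp (by omega)).symm
  obtain ⟨j, hxj, hxyj⟩ := hM x y hx hyx hx0 heq
  have hltx := vecNnz_sub_single_lt hxj
  have hlty := vecNnz_sub_single_lt (hxyj ▸ hxj : y j ≠ 0)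
  rw [← hxyj] at hlty
  have heq' : M *ᵥ (x - Pi.single j (x j)) = M *ᵥ (y - Pi.single j (x j)) := by
    rw [mulVec_sub, mulVec_sub, heq]
  exact sub_left_inj.mp (ih _ (by omega) (by omega) (by omega) heq' rfl)

end Peeling

/- Since `Fin n` is 0-based, column `j` of `B` is the binary expansion of `j + 1 ∈ {1, …, n}`;
rows of `H` are indexed by pairs `(i, k)` instead of by `(i − 1)ℓ + k`. -/
open Classical in
theorem expander_exact_recovery_general {R : Type*} [Ring R] {ℓ m' t d : ℕ} (hd : 1 ≤ d)
    {n : ℕ} (hn : n = 2 ^ ℓ - 1)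
    (nbrs : Fin n → Finset (Fin m')) (hreg : ∀ j, (nbrs j).card = d)
    (hexp : ∀ S : Finset (Fin n), S.card ≤ t →
      (1 - 1 / 12 : ℝ) * d * S.card ≤ ((S.biUnion nbrs).card : ℝ))
    (A : Matrix (Fin m') (Fin n) R)
    (hA : ∀ (i : Fin m') (j : Fin n), A i j = if i ∈ nbrs j then 1 else 0)
    (B : Matrix (Fin ℓ) (Fin n) R)
    (hB : ∀ (k : Fin ℓ) (j : Fin n),
      B k j = if Nat.testBit ((j : ℕ) + 1) (ℓ - 1 - (k : ℕ)) then 1 else 0)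
    (H : Matrix (Fin m' × Fin ℓ) (Fin n) R)
    (hH : ∀ (i : Fin m') (k : Fin ℓ) (j : Fin n), H (i, k) j = A i j * B k j) :
    (∃ Rec : (Fin m' × Fin ℓ → R) → (Fin n → R),
      ∀ x : Fin n → R, vecNnz x ≤ t → Rec (H.mulVec x) = x) ∧
    ∀ x y : Fin n → R, vecNnz x ≤ t → vecNnz y ≤ t →
      H.mulVec x = H.mulVec y → x = y := by
  set code : Fin n → Fin ℓ → Bool := fun j => binaryCode ℓ (j + 1)
  have hlt : ∀ j : Fin n, (j : ℕ) + 1 < 2 ^ ℓ := fun j => by have := j.2; omega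
  have hinj : Injective code := fun j j' h =>
    Fin.ext (Nat.succ_injective (binaryCode_injOn ℓ (hlt j) (hlt j') h))
  have hne : ∀ j, ∃ k, code j k = true :=
    fun j => exists_binaryCode_eq_true (hlt j) (Nat.succ_ne_zero _)
  have hHcode : H = nbrCodeMatrix R nbrs code := by
    ext ⟨i, k⟩ j
    rw [hH, hA, hB, ite_zero_mul_ite_zero, mul_one]
    rfl
  have hexp' : ∀ S : Finset (Fin n), S.Nonempty → #S ≤ t →
      3 * (d * #S) < 4 * #(S.biUnion nbrs) := by
    intro S hS hSt
    have hpos : (0 : ℝ) < d * #S :=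
      mul_pos (by exact_mod_cast hd) (by exact_mod_cast hS.card_pos)
    exact_mod_cast (by linarith [hexp S hSt] : (3 : ℝ) * (d * #S) < 4 * #(S.biUnion nbrs))
  have hcommon : ∀ x y : Fin n → R, vecNnz x ≤ t → vecNnz y ≤ vecNnz x → x ≠ 0 →
      H *ᵥ x = H *ᵥ y → ∃ j, x j ≠ 0 ∧ x j = y j := by
    intro x y hx hyx hx0 heq
    rw [hHcode] at heq
    have hS : (vecSupp x).Nonempty :=
      card_pos.mp (Nat.pos_of_ne_zero (mt vecNnz_eq_zero_iff.mp hx0))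
    exact nbrCodeMatrix_exists_eq_of_mulVec_eq hreg hinj hne (hexp' _ hS hx) hyx heq
  have hsparse : ∀ x y : Fin n → R, vecNnz x ≤ t → vecNnz y ≤ t → H *ᵥ x = H *ᵥ y → x = y :=
    fun _ _ => eq_of_mulVec_eq_of_exists_eq H t hcommon
  have hinjOn : Set.InjOn (H *ᵥ ·) {x | vecNnz x ≤ t} := fun x hx y hy => hsparse x y hx hy
  exact ⟨⟨invFunOn (H *ᵥ ·) {x | vecNnz x ≤ t}, fun x hx => hinjOn.leftInvOn_invFunOn hx⟩,
    hsparse⟩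

open Classical in
theorem expander_exact_recovery {R : Type*} [Ring R] {ℓ m' t d : ℕ}
    (hl : 1 ≤ ℓ) (ht : 1 ≤ t) (hd : 1 ≤ d) (hm' : 1 ≤ m')
    {n : ℕ} (hn : n = 2 ^ ℓ - 1)
    (nbrs : Fin n → Finset (Fin m')) (hreg : ∀ j, (nbrs j).card = d)
    (hexp : ∀ S : Finset (Fin n), S.card ≤ t →
      (1 - 1 / 12 : ℝ) * d * S.card ≤ ((S.biUnion nbrs).card : ℝ))
    (A : Matrix (Fin m') (Fin n) R)
    (hA : ∀ (i : Fin m') (j : Fin n), A i j = if i ∈ nbrs j then 1 else 0)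
    (B : Matrix (Fin ℓ) (Fin n) R)
    (hB : ∀ (k : Fin ℓ) (j : Fin n),
      B k j = if Nat.testBit ((j : ℕ) + 1) (ℓ - 1 - (k : ℕ)) then 1 else 0)
    (H : Matrix (Fin m' × Fin ℓ) (Fin n) R)
    (hH : ∀ (i : Fin m') (k : Fin ℓ) (j : Fin n), H (i, k) j = A i j * B k j) :
    (∃ Rec : (Fin m' × Fin ℓ → R) → (Fin n → R),
      ∀ x : Fin n → R, vecNnz x ≤ t → Rec (H.mulVec x) = x) ∧
    ∀ x y : Fin n → R, vecNnz x ≤ t → vecNnz y ≤ t →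
      H.mulVec x = H.mulVec y → x = y :=
  expander_exact_recovery_general hd hn nbrs hreg hexp A hA B hB H hH
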